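/- arXiv:0801.0096 — 8 statements merged into one kernel-verified Lean document; each statement's English description precedes it below -/
import Mathlib

section
/- Let α, β ∈ ℂ and set ψ = (α, β) ∈ ℂ². Define the Bell states Φ₀₀ = (e₀₀ + e₁₁)/√2, Φ₀₁ = (e₀₀ − e₁₁)/√2, Φ₁₀ = (e₀₁ + e₁₀)/√2, Φ₁₁ = (e₀₁ − e₁₀)/√2 as functions Fin 2 × Fin 2 → ℂ, and let X = ![![0,1],![1,0]], Z = ![![1,0],![0,−1]] be the Pauli matrices. Then for all indices a′, a, b ∈ Fin 2: ψ(a′) · Φ₀₀(a, b) = (1/2) · Σ_{s₁, s₂ ∈ {0,1}} Φ_{s₁ s₂}(a′, a) · (X^{s₁} Z^{s₂} ψ)(b). That is, the three-qubit state |ψ⟩ ⊗ |Φ⁺⟩ decomposes componentwise as (1/2) Σ_{s₁ s₂} |Φ_{s₁ s₂}⟩ ⊗ X^{s₁} Z^{s₂} |ψ⟩. -/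
/-!
Both sides are linear in `ψ`, so the identity reduces to the completeness relation of the Bell
basis paired with its Pauli corrections,
`∑ s, Φ_{s₁ s₂}(a', a) • X^{s₁} Z^{s₂} = √2 • E_{a a'}`,
a finite check on 2 × 2 matrices. Applying it to `ψ` gives `√2 · [b = a] · ψ(a')`, and
`Φ₀₀(a, b) = [a = b] / √2`.
-/

open Matrix

/-- Standard basis function on `Fin 2 × Fin 2`: value 1 at `(j,k)`, 0 elsewhere. -/
noncomputable def stdBasisFun (j k : Fin 2) : Fin 2 × Fin 2 → ℂ :=
  fun p => if p = (j, k) then 1 else 0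

/-- The Bell states `Φ_{s₁ s₂}` as functions `Fin 2 × Fin 2 → ℂ`. -/
noncomputable def BellState (s₁ s₂ : Fin 2) : Fin 2 × Fin 2 → ℂ :=
  if s₁ = 0 then
    (if s₂ = 0 then
      fun p => (stdBasisFun 0 0 p + stdBasisFun 1 1 p) / Real.sqrt 2
    else
      fun p => (stdBasisFun 0 0 p - stdBasisFun 1 1 p) / Real.sqrt 2)
  else
    (if s₂ = 0 then
      fun p => (stdBasisFun 0 1 p + stdBasisFun 1 0 p) / Real.sqrt 2
    else
      fun p => (stdBasisFun 0 1 p - stdBasisFun 1 0 p) / Real.sqrt 2)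

lemma Complex.ofReal_sqrt_two_sq : ((Real.sqrt 2 : ℝ) : ℂ) ^ 2 = 2 := by
  rw [← Complex.ofReal_pow, Real.sq_sqrt zero_le_two, Complex.ofReal_ofNat]

lemma Complex.ofReal_sqrt_two_ne_zero : ((Real.sqrt 2 : ℝ) : ℂ) ≠ 0 := by
  exact_mod_cast (Real.sqrt_pos.2 two_pos).ne'

lemma bellState_zero_zero_apply (a b : Fin 2) :
    BellState 0 0 (a, b) = if b = a then ((Real.sqrt 2 : ℝ) : ℂ)⁻¹ else 0 := by
  fin_cases a <;> fin_cases b <;> simp [BellState, stdBasisFun]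

lemma sum_bellState_smul_pauli (a' a : Fin 2) :
    ∑ s₁ : Fin 2, ∑ s₂ : Fin 2, BellState s₁ s₂ (a', a) •
      ((!![0, 1; 1, 0] : Matrix (Fin 2) (Fin 2) ℂ) ^ (s₁ : ℕ) * !![1, 0; 0, -1] ^ (s₂ : ℕ))
      = ((Real.sqrt 2 : ℝ) : ℂ) • single a a' 1 := by
  ext i j
  fin_cases a' <;> fin_cases a <;> fin_cases i <;> fin_cases j <;>
    simp [Fin.sum_univ_two, BellState, stdBasisFun, single] <;>
    field_simp [Complex.ofReal_sqrt_two_ne_zero] <;> norm_num [Complex.ofReal_sqrt_two_sq]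

/-- Componentwise teleportation decomposition:
`|ψ⟩ ⊗ |Φ⁺⟩ = (1/2) Σ_{s₁ s₂} |Φ_{s₁ s₂}⟩ ⊗ X^{s₁} Z^{s₂} |ψ⟩`. -/
theorem teleportation_decomposition (α β : ℂ) :
    let ψ : Fin 2 → ℂ := ![α, β]
    let X : Matrix (Fin 2) (Fin 2) ℂ := !![0, 1; 1, 0]
    let Z : Matrix (Fin 2) (Fin 2) ℂ := !![1, 0; 0, -1]
    ∀ a' a b : Fin 2,
      ψ a' * BellState 0 0 (a, b)
        = (1 / 2 : ℂ) * ∑ s₁ : Fin 2, ∑ s₂ : Fin 2,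
            BellState s₁ s₂ (a', a) *
              ((X ^ (s₁ : ℕ) * Z ^ (s₂ : ℕ)).mulVec ψ) b := by
  intro ψ X Z a' a b
  have completeness := congrArg (fun M => (M *ᵥ ψ) b) (sum_bellState_smul_pauli a' a)
  simp only [sum_mulVec, smul_mulVec, Finset.sum_apply, Pi.smul_apply, smul_eq_mul,
    single_mulVec] at completeness
  rw [completeness, bellState_zero_zero_apply, Function.update_apply]
  split_ifs
  · field_simp [Complex.ofReal_sqrt_two_ne_zero]
    rw [Complex.ofReal_sqrt_two_sq]
  · simp
end

section
/- Let α, β ∈ ℂ with |α|² + |β|² = 1 and set ψ = (α, β) ∈ ℂ². Define the Bell states Φ₀₀ = (e₀₀ + e₁₁)/√2, Φ₀₁ = (e₀₀ − e₁₁)/√2, Φ₁₀ = (e₀₁ + e₁₀)/√2, Φ₁₁ = (e₀₁ − e₁₀)/√2 as functions Fin 2 × Fin 2 → ℂ. Then for every choice of s₁, s₂ ∈ {0,1}, the probability of Bell-measurement outcome (s₁, s₂) on the first two qubits of |ψ⟩ ⊗ |Φ⁺⟩ equals 1/4; explicitly, Σ_{b ∈ Fin 2} | Σ_{a′, a ∈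 Fin 2} conj(Φ_{s₁ s₂}(a′, a)) · ψ(a′) · Φ₀₀(a, b) |² = 1/4. Consequently the two classical bits S₁, S₂ produced by the Bell measurement are independent and identically distributed uniform bits. -/
open Matrix

/-! Contracting with `Φ⁺ = (e₀₀ + e₁₁)/√2` identifies Bob's index with Alice's second index,
so the amplitude of Bob's basis state `b` after outcome `(s₁, s₂)` is `±ψ(b + s₁)/2`: each
Bell state pairs `b` with exactly one `a'`, with coefficient `±1/√2`. Hence the outcome only
permutes the components of `ψ`, and its probability is `(‖α‖² + ‖β‖²)/4 = 1/4`. -/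

lemma BellState_apply (s₁ s₂ a b : Fin 2) :
    BellState s₁ s₂ (a, b) =
      if a = b + s₁ then (-1) ^ (s₂.val * a.val) / (Real.sqrt 2 : ℂ) else 0 := by
  fin_cases s₁ <;> fin_cases s₂ <;> fin_cases a <;> fin_cases b <;>
    simp [BellState, stdBasisFun]

lemma conj_BellState (s₁ s₂ : Fin 2) (p : Fin 2 × Fin 2) :
    starRingEnd ℂ (BellState s₁ s₂ p) = BellState s₁ s₂ p := by
  obtain ⟨a, b⟩ := p
  rw [BellState_apply]
  split_ifs <;> simp

lemma sum_mul_BellState_zero_zero (f : Fin 2 → ℂ) (b : Fin 2) :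
    ∑ a : Fin 2, f a * BellState 0 0 (a, b) = f b / Real.sqrt 2 := by
  simp [BellState_apply, div_eq_mul_inv]

lemma bell_amplitude (ψ : Fin 2 → ℂ) (s₁ s₂ b : Fin 2) :
    ∑ a' : Fin 2, ∑ a : Fin 2,
        starRingEnd ℂ (BellState s₁ s₂ (a', a)) * ψ a' * BellState 0 0 (a, b) =
      (-1) ^ (s₂.val * (b + s₁).val) * ψ (b + s₁) / 2 := by
  have hsqrt : (Real.sqrt 2 : ℂ) * Real.sqrt 2 = 2 := mod_cast Real.mul_self_sqrt zero_le_two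
  simp_rw [sum_mul_BellState_zero_zero, conj_BellState, BellState_apply]
  simp only [ite_mul, zero_mul, ite_div, zero_div, Finset.sum_ite_eq', Finset.mem_univ, if_true]
  rw [div_mul_eq_mul_div, div_div, hsqrt]

lemma norm_bell_amplitude_sq (ψ : Fin 2 → ℂ) (s₁ s₂ b : Fin 2) :
    ‖(-1) ^ (s₂.val * (b + s₁).val) * ψ (b + s₁) / 2‖ ^ 2 = ‖ψ (b + s₁)‖ ^ 2 / 4 := by
  rw [norm_div, norm_mul, norm_pow, norm_neg, norm_one, one_pow, one_mul, div_pow]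
  norm_num

/-- Each Bell-measurement outcome `(s₁, s₂)` on the first two qubits of
`|ψ⟩ ⊗ |Φ⁺⟩` occurs with probability `1/4`: the classical bits from the Bell
measurement are i.i.d. uniform. -/
theorem bell_outcomes_uniform (α β : ℂ)
    (hnorm : ‖α‖ ^ 2 + ‖β‖ ^ 2 = 1) :
    let ψ : Fin 2 → ℂ := ![α, β]
    ∀ s₁ s₂ : Fin 2,
      ∑ b : Fin 2,
        ‖∑ a' : Fin 2, ∑ a : Fin 2,
          (starRingEnd ℂ) (BellState s₁ s₂ (a', a)) * ψ a' *
            BellState 0 0 (a, b)‖ ^ 2 = 1 / 4 := by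
  intro ψ s₁ s₂
  calc ∑ b : Fin 2, ‖∑ a' : Fin 2, ∑ a : Fin 2,
          (starRingEnd ℂ) (BellState s₁ s₂ (a', a)) * ψ a' * BellState 0 0 (a, b)‖ ^ 2
      = (∑ b : Fin 2, ‖ψ (b + s₁)‖ ^ 2) / 4 := by
        simp only [bell_amplitude, norm_bell_amplitude_sq, Finset.sum_div]
    _ = (∑ b : Fin 2, ‖ψ b‖ ^ 2) / 4 :=
        congrArg (· / 4) (Equiv.sum_comp (Equiv.addRight s₁) fun b => ‖ψ b‖ ^ 2)
    _ = (‖α‖ ^ 2 + ‖β‖ ^ 2) / 4 := by rw [Fin.sum_univ_two]; rfl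
    _ = 1 / 4 := by rw [hnorm]
end

section
/- Let α, β ∈ ℂ with |α|² + |β|² = 1 and ψ = (α, β) ∈ ℂ²; let X = ![![0,1],![1,0]] and Z = ![![1,0],![0,−1]] be the Pauli matrices, and let qZ = |⟨ψ, Zψ⟩|², qX = |⟨ψ, Xψ⟩|², qXZ = |⟨ψ, XZψ⟩|². Let p : {0,1} × {0,1} → ℝ satisfy p(0,s) + p(1,s) = 1 for each s ∈ {0,1} (p(y,s) is the probability the receiver decodes y given the sender's bit s), and set P = p(0,0) − p(0,1). Define Bob's density matrix ρ_B = (1/4) Σ_{y₁,y₂,s₁,s₂ ∈ {0,1}} p(y₁,s₁)·p(y₂,s₂) · (X^{y₁⊕s₁} Z^{y₂⊕s₂} ψ)(X^{y₁⊕s₁} Z^{y₂⊕s₂} ψ)†, where ⊕ is addition modulo 2 and v v† denotes the outer product of v ∈ ℂ² with its conjugate. Then the teleportation fidelity satisfies ⟨ψ, ρ_B ψ⟩ = 1/2 + P·(qX + qZ + qXZ·P)/2 (in particular this inner product is real). -/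
open Matrix

/-!
A rank-one term `v v†` contributes `|⟨ψ, v⟩|²` to `⟨ψ, ρ_B ψ⟩`, so the fidelity is the average of
`|⟨ψ, X^a Z^b ψ⟩|²` over the two independent exponents `a = y₁ ⊕ s₁`, `b = y₂ ⊕ s₂`. Each exponent is
`0` with weight `(1 + P)/2` and `1` with weight `(1 - P)/2`, which gives
`((1 + P)² + (1 - P²)(qX + qZ) + (1 - P)² qXZ) / 4`. Since `XZ = -iY`, the Bloch-sphere identity
`qX + qZ + qXZ = ‖ψ‖⁴ = 1` turns this into the stated formula.
-/

theorem star_dotProduct_vecMulVec_star_mulVec {𝕜 n : Type*} [RCLike 𝕜] [Fintype n]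
    (ψ v : n → 𝕜) :
    star ψ ⬝ᵥ vecMulVec v (star v) *ᵥ ψ = ((‖star ψ ⬝ᵥ v‖ ^ 2 : ℝ) : 𝕜) := by
  rw [vecMulVec_mulVec, op_smul_eq_smul, dotProduct_smul, smul_eq_mul, star_dotProduct v,
    RCLike.ofReal_pow, ← RCLike.mul_conj, mul_comm]
  rfl

theorem pauli_expectation_norm_sq_sum (ψ : Fin 2 → ℂ) :
    ‖star ψ ⬝ᵥ !![0, 1; 1, 0] *ᵥ ψ‖ ^ 2 + ‖star ψ ⬝ᵥ !![1, 0; 0, -1] *ᵥ ψ‖ ^ 2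
      + ‖star ψ ⬝ᵥ (!![0, 1; 1, 0] * !![1, 0; 0, -1]) *ᵥ ψ‖ ^ 2 = ‖star ψ ⬝ᵥ ψ‖ ^ 2 := by
  simp [Complex.sq_norm, Complex.normSq_apply, dotProduct, Fin.sum_univ_two, mulVec]
  ring

theorem sum_two_channels_mul_apply_add (p q : Fin 2 → Fin 2 → ℝ)
    (hp : ∀ s : Fin 2, p 0 s + p 1 s = 1) :
    let P := p 0 0 - p 0 1
    ∑ y₁ : Fin 2, ∑ y₂ : Fin 2, ∑ s₁ : Fin 2, ∑ s₂ : Fin 2,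
        p y₁ s₁ * p y₂ s₂ * q (y₁ + s₁) (y₂ + s₂)
      = (1 + P) ^ 2 * q 0 0 + (1 - P ^ 2) * (q 1 0 + q 0 1) + (1 - P) ^ 2 * q 1 1 := by
  intro P
  have h10 : p 1 0 = 1 - p 0 0 := by linarith [hp 0]
  have h11 : p 1 1 = 1 - p 0 1 := by linarith [hp 1]
  simp only [Fin.sum_univ_two, P, h10, h11, add_zero, zero_add, Fin.reduceAdd]
  ring

/-- Fidelity of the modified teleportation protocol: with Bob's mixed state
`ρ_B = (1/4) Σ p(y₁,s₁) p(y₂,s₂) (X^{y₁⊕s₁} Z^{y₂⊕s₂} ψ)(X^{y₁⊕s₁} Z^{y₂⊕s₂} ψ)†`,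
the fidelity is `⟨ψ, ρ_B ψ⟩ = 1/2 + P(qX + qZ + qXZ·P)/2`, `P = p(0,0) − p(0,1)`. -/
theorem teleportation_fidelity (α β : ℂ)
    (hnorm : ‖α‖ ^ 2 + ‖β‖ ^ 2 = 1)
    (p : Fin 2 → Fin 2 → ℝ)
    (hp : ∀ s : Fin 2, p 0 s + p 1 s = 1) :
    let ψ : Fin 2 → ℂ := ![α, β]
    let X : Matrix (Fin 2) (Fin 2) ℂ := !![0, 1; 1, 0]
    let Z : Matrix (Fin 2) (Fin 2) ℂ := !![1, 0; 0, -1]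
    let qZ : ℝ := ‖star ψ ⬝ᵥ Z.mulVec ψ‖ ^ 2
    let qX : ℝ := ‖star ψ ⬝ᵥ X.mulVec ψ‖ ^ 2
    let qXZ : ℝ := ‖star ψ ⬝ᵥ (X * Z).mulVec ψ‖ ^ 2
    let P : ℝ := p 0 0 - p 0 1
    let ρB : Matrix (Fin 2) (Fin 2) ℂ :=
      (1 / 4 : ℂ) • ∑ y₁ : Fin 2, ∑ y₂ : Fin 2, ∑ s₁ : Fin 2, ∑ s₂ : Fin 2,
        ((p y₁ s₁ * p y₂ s₂ : ℝ) : ℂ) •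
          vecMulVec
            ((X ^ ((y₁ + s₁ : Fin 2) : ℕ) * Z ^ ((y₂ + s₂ : Fin 2) : ℕ)).mulVec ψ)
            (star ((X ^ ((y₁ + s₁ : Fin 2) : ℕ) * Z ^ ((y₂ + s₂ : Fin 2) : ℕ)).mulVec ψ))
    star ψ ⬝ᵥ ρB.mulVec ψ
      = ((1 / 2 + P * (qX + qZ + qXZ * P) / 2 : ℝ) : ℂ) := by
  intro ψ X Z qZ qX qXZ P ρB
  set q : Fin 2 → Fin 2 → ℝ := fun a b => ‖star ψ ⬝ᵥ (X ^ (a : ℕ) * Z ^ (b : ℕ)) *ᵥ ψ‖ ^ 2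
  have hψ : ‖star ψ ⬝ᵥ ψ‖ ^ 2 = 1 := by
    have hself : star ψ ⬝ᵥ ψ = ((‖α‖ ^ 2 + ‖β‖ ^ 2 : ℝ) : ℂ) := by
      simp [ψ, dotProduct, Fin.sum_univ_two, Complex.conj_mul']
    simp [hself, hnorm]
  have hbloch : qX + qZ + qXZ = 1 := hψ ▸ pauli_expectation_norm_sq_sum ψ
  have hfid : star ψ ⬝ᵥ ρB *ᵥ ψ = ((1 / 4 * ∑ y₁ : Fin 2, ∑ y₂ : Fin 2, ∑ s₁ : Fin 2, ∑ s₂ : Fin 2,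
        p y₁ s₁ * p y₂ s₂ * q (y₁ + s₁) (y₂ + s₂) : ℝ) : ℂ) := by
    simp only [ρB, smul_mulVec, sum_mulVec, dotProduct_smul, dotProduct_sum,
      star_dotProduct_vecMulVec_star_mulVec, q]
    push_cast
    simp only [smul_eq_mul]
    rfl
  rw [hfid, sum_two_channels_mul_apply_add p q hp]
  have hq : q 0 0 = 1 ∧ q 1 0 = qX ∧ q 0 1 = qZ ∧ q 1 1 = qXZ := by
    simp only [q, Fin.val_zero, Fin.val_one, pow_zero, pow_one, one_mul, mul_one, one_mulVec]
    exact ⟨hψ, rfl, rfl, rfl⟩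
  obtain ⟨h00, h10, h01, h11⟩ := hq
  rw [h00, h10, h01, h11]
  congr 1
  linear_combination (1 - 2 * P - P ^ 2) / 4 * hbloch
end

section
/- Let θ, A be reals with 0 < A < θ and let m ∈ ℝ with m ∉ [θ − A, θ + A]. Let (μ_k) be a sequence of probability measures on ℝ such that for each k the identity function and the function x ↦ (x − m)² are integrable with ∫ x dμ_k(x) = m, and such that the variances σ_k² = ∫ (x − m)² dμ_k(x) tend to 0 as k → ∞. Let qX, qZ, qXZ be nonnegative reals with qX + qZ + qXZ = 1, set P_k = μ_k((θ − A, θ + A)) and F_k = 1/2 + P_k·(qX + qZ + qXZ·P_k)/2. Then P_k → 0 and F_k → 1/2 as k → ∞. -/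
open MeasureTheory Filter Set

/-- If-part of the finite-variance forbidden-interval theorem: if the noise
mean `m` lies outside the forbidden interval `[θ − A, θ + A]` and the
variances tend to zero, then the detection parameter `P_k` tends to `0` and
the teleportation fidelity `F_k` falls to its minimum `1/2`. -/
theorem forbidden_interval_finite_variance_if
    (θ A m : ℝ) (hA : 0 < A) (hAθ : A < θ)
    (hm : m ∉ Icc (θ - A) (θ + A))
    (μ : ℕ → Measure ℝ) (hprob : ∀ k, IsProbabilityMeasure (μ k))
    (hint : ∀ k, Integrable (fun x => x) (μ k))
    (hint2 : ∀ k, Integrable (fun x => (x - m) ^ 2) (μ k))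
    (hmean : ∀ k, ∫ x, x ∂(μ k) = m)
    (hvar : Tendsto (fun k => ∫ x, (x - m) ^ 2 ∂(μ k)) atTop (nhds 0))
    (qX qZ qXZ : ℝ) (hqX : 0 ≤ qX) (hqZ : 0 ≤ qZ) (hqXZ : 0 ≤ qXZ)
    (hsum : qX + qZ + qXZ = 1) :
    Tendsto (fun k => ((μ k) (Ioo (θ - A) (θ + A))).toReal) atTop (nhds 0) ∧
    Tendsto (fun k =>
        1 / 2 + ((μ k) (Ioo (θ - A) (θ + A))).toReal *
          (qX + qZ + qXZ * ((μ k) (Ioo (θ - A) (θ + A))).toReal) / 2)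
      atTop (nhds (1 / 2)) := by
  have hprob' := hprob
  -- distance from m to the interval
  set δ : ℝ := if m < θ - A then θ - A - m else m - (θ + A) with hδdef
  have hδpos : 0 < δ := by
    rcases lt_or_ge m (θ - A) with h | h
    · simp [hδdef, if_pos h]; linarith
    · have h2 : θ + A < m := by
        by_contra hc
        exact hm ⟨h, le_of_not_gt hc⟩
      simp [hδdef, if_neg (not_lt.mpr h)]; linarith
  have hsub : Ioo (θ - A) (θ + A) ⊆ {x : ℝ | δ ^ 2 ≤ (x - m) ^ 2} := by
    intro x hx
    have : δ ≤ |x - m| := by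
      rcases lt_or_ge m (θ - A) with h | h
      · have : δ = θ - A - m := if_pos h
        rw [this]
        have := hx.1
        rw [abs_of_pos (by linarith)]
        linarith
      · have h2 : θ + A < m := by
          by_contra hc
          exact hm ⟨h, le_of_not_gt hc⟩
        have hδ : δ = m - (θ + A) := if_neg (not_lt.mpr h)
        rw [hδ]
        have := hx.2
        rw [abs_of_neg (by linarith)]
        linarith
    calc δ ^ 2 ≤ |x - m| ^ 2 := by
          apply sq_le_sq' <;> [linarith [abs_nonneg (x - m)]; exact this]
      _ = (x - m) ^ 2 := sq_abs _
  have hbound : ∀ k, ((μ k) (Ioo (θ - A) (θ + A))).toReal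
      ≤ (∫ x, (x - m) ^ 2 ∂(μ k)) / δ ^ 2 := by
    intro k
    have hmeas : ((μ k) (Ioo (θ - A) (θ + A))).toReal
        ≤ ((μ k) {x : ℝ | δ ^ 2 ≤ (x - m) ^ 2}).toReal := by
      apply ENNReal.toReal_mono
      · exact (measure_ne_top (μ k) _)
      · exact measure_mono hsub
    have hcheb := mul_meas_ge_le_integral_of_nonneg
      (μ := μ k) (f := fun x => (x - m) ^ 2)
      (ae_of_all _ (fun x => sq_nonneg (x - m))) (hint2 k) (δ ^ 2)
    have hδ2 : (0:ℝ) < δ ^ 2 := pow_pos hδpos 2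
    calc ((μ k) (Ioo (θ - A) (θ + A))).toReal
        ≤ ((μ k) {x : ℝ | δ ^ 2 ≤ (x - m) ^ 2}).toReal := hmeas
      _ ≤ (∫ x, (x - m) ^ 2 ∂(μ k)) / δ ^ 2 := by
          rw [le_div_iff₀ hδ2, mul_comm]
          exact hcheb
  have hP0 : Tendsto (fun k => ((μ k) (Ioo (θ - A) (θ + A))).toReal) atTop (nhds 0) := by
    have hhi : Tendsto (fun k => (∫ x, (x - m) ^ 2 ∂(μ k)) / δ ^ 2) atTop (nhds 0) := by
      have := hvar.div_const (δ ^ 2)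
      simpa using this
    refine tendsto_of_tendsto_of_tendsto_of_le_of_le tendsto_const_nhds hhi
      (fun k => ENNReal.toReal_nonneg) hbound
  refine ⟨hP0, ?_⟩
  have : Tendsto (fun k =>
      1 / 2 + ((μ k) (Ioo (θ - A) (θ + A))).toReal *
        (qX + qZ + qXZ * ((μ k) (Ioo (θ - A) (θ + A))).toReal) / 2)
      atTop (nhds (1 / 2 + 0 * (qX + qZ + qXZ * 0) / 2)) := by
    exact tendsto_const_nhds.add
      ((hP0.mul ((tendsto_const_nhds.add (tendsto_const_nhds.mul hP0)))).div_const 2)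
  simpa using this
end

section
/- Let θ, A be reals with 0 < A < θ and let m ∈ ℝ with θ − A < m < θ + A. Let (μ_k) be a sequence of probability measures on ℝ such that for each k the identity function and the function x ↦ (x − m)² are integrable with ∫ x dμ_k(x) = m, and such that the variances σ_k² = ∫ (x − m)² dμ_k(x) tend to 0 as k → ∞. Let qX, qZ, qXZ be nonnegative reals with qX + qZ + qXZ = 1, set P_k = μ_k((θ − A, θ + A)) and F_k = 1/2 + P_k·(qX + qZ + qXZ·P_k)/2. Then P_k → 1 and F_k → 1 as k → ∞. -/
open MeasureTheory Filter Set

/-- Only-if part of the finite-variance forbidden-interval theorem: if the noise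
mean `m` lies inside the forbidden interval `[θ − A, θ + A]` and the
variances tend to zero, then the detection parameter `P_k` tends to `1` and
the teleportation fidelity `F_k` rises to its maximum `1`. -/
theorem forbidden_interval_finite_variance_only_if
    (θ A m : ℝ) (hA : 0 < A) (hAθ : A < θ)
    (hm₁ : θ - A < m) (hm₂ : m < θ + A)
    (μ : ℕ → Measure ℝ) (hprob : ∀ k, IsProbabilityMeasure (μ k))
    (hint : ∀ k, Integrable (fun x => x) (μ k))
    (hint2 : ∀ k, Integrable (fun x => (x - m) ^ 2) (μ k))
    (hmean : ∀ k, ∫ x, x ∂(μ k) = m)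
    (hvar : Tendsto (fun k => ∫ x, (x - m) ^ 2 ∂(μ k)) atTop (nhds 0))
    (qX qZ qXZ : ℝ) (hqX : 0 ≤ qX) (hqZ : 0 ≤ qZ) (hqXZ : 0 ≤ qXZ)
    (hsum : qX + qZ + qXZ = 1) :
    Tendsto (fun k => ((μ k) (Ioo (θ - A) (θ + A))).toReal) atTop (nhds 1) ∧
    Tendsto (fun k =>
        1 / 2 + ((μ k) (Ioo (θ - A) (θ + A))).toReal *
          (qX + qZ + qXZ * ((μ k) (Ioo (θ - A) (θ + A))).toReal) / 2)
      atTop (nhds 1) := by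
  set ε : ℝ := min (m - (θ - A)) (θ + A - m) with hε
  have hε0 : 0 < ε := lt_min (by linarith) (by linarith)
  set S : Set ℝ := Ioo (θ - A) (θ + A) with hS
  -- complement bound
  have hsub : ∀ x, x ∉ S → ε ^ 2 ≤ (x - m) ^ 2 := by
    intro x hx
    rw [hS, mem_Ioo, not_and_or, not_lt, not_lt] at hx
    rcases hx with hx | hx
    · have h1 : ε ≤ m - x := le_trans (min_le_left _ _) (by linarith)
      calc ε ^ 2 ≤ (m - x) ^ 2 := by nlinarith
        _ = (x - m) ^ 2 := by ring
    · have h1 : ε ≤ x - m := le_trans (min_le_right _ _) (by linarith)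
      nlinarith
  have hCbound : ∀ k, ((μ k) Sᶜ).toReal ≤ (∫ x, (x - m) ^ 2 ∂(μ k)) / ε ^ 2 := by
    intro k
    have hmarkov := mul_meas_ge_le_integral_of_nonneg (μ := μ k)
      (f := fun x => (x - m) ^ 2) (Eventually.of_forall fun x => sq_nonneg _)
      (hint2 k) (ε ^ 2)
    have hmono : (μ k) Sᶜ ≤ (μ k) {x | ε ^ 2 ≤ (x - m) ^ 2} :=
      measure_mono fun x hx => hsub x hx
    have := hprob k
    have h1 : ((μ k) Sᶜ).toReal ≤ ((μ k) {x | ε ^ 2 ≤ (x - m) ^ 2}).toReal :=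
      ENNReal.toReal_mono (measure_ne_top _ _) hmono
    have hε2 : 0 < ε ^ 2 := by positivity
    rw [le_div_iff₀ hε2]
    calc ((μ k) Sᶜ).toReal * ε ^ 2
        ≤ ((μ k) {x | ε ^ 2 ≤ (x - m) ^ 2}).toReal * ε ^ 2 := by nlinarith
      _ = ε ^ 2 * ((μ k) {x | ε ^ 2 ≤ (x - m) ^ 2}).toReal := by ring
      _ ≤ _ := hmarkov
  have hC0 : Tendsto (fun k => ((μ k) Sᶜ).toReal) atTop (nhds 0) := by
    have hdiv : Tendsto (fun k => (∫ x, (x - m) ^ 2 ∂(μ k)) / ε ^ 2) atTop (nhds 0) := by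
      simpa using hvar.div_const (ε ^ 2)
    refine squeeze_zero (fun k => ENNReal.toReal_nonneg) hCbound hdiv
  have hP : Tendsto (fun k => ((μ k) S).toReal) atTop (nhds 1) := by
    have hEq : ∀ k, ((μ k) S).toReal = 1 - ((μ k) Sᶜ).toReal := by
      intro k
      have := hprob k
      have hmeas : MeasurableSet S := measurableSet_Ioo
      have h1 : (μ k) Sᶜ = 1 - (μ k) S := by
        rw [measure_compl hmeas (measure_ne_top _ _), measure_univ]
      have hle : (μ k) S ≤ 1 := prob_le_one
      rw [h1, ENNReal.toReal_sub_of_le hle (by simp)]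
      simp
    simp only [hEq]
    simpa using (tendsto_const_nhds (x := (1:ℝ))).sub hC0
  refine ⟨hP, ?_⟩
  have : Tendsto (fun k =>
      1 / 2 + ((μ k) S).toReal * (qX + qZ + qXZ * ((μ k) S).toReal) / 2) atTop
      (nhds (1 / 2 + 1 * (qX + qZ + qXZ * 1) / 2)) := by
    exact tendsto_const_nhds.add
      ((hP.mul (tendsto_const_nhds.add (tendsto_const_nhds.mul hP))).div_const 2)
  convert this using 2
  linarith
end

section
/- Let α ∈ (0, 2] with α ≠ 1, β ∈ [−1, 1], a ∈ ℝ, and let θ, A be reals with 0 < A < θ and a ∉ [θ − A, θ + A]. For each γ > 0 let μ_γ be a probability measure on ℝ whose characteristic function satisfies, for all ω ∈ ℝ, φ_{μ_γ}(ω) = exp( i·a·ω − γ·|ω|^α·(1 + i·β·sign(ω)·tan(απ/2)) ). Let qX, qZ, qXZ be nonnegative reals with qX + qZ + qXZ = 1, set P_γ = μ_γ((θ − A, θ + A)) and F_γ = 1/2 + P_γ·(qX + qZ + qXZ·P_γ)/2. Then P_γ → 0 and F_γ → 1/2 as γ → 0⁺. -/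
/-!
As `γ → 0⁺` the characteristic functions `φ_γ` converge pointwise to `ω ↦ e^{iaω}`, that of the
point mass at `a`. Since `a` lies outside the compact interval `[θ - A, θ + A]`, a single frequency
suffices to see the mass leave the interval: for suitable `ω` and `c > 0` we have
`c ≤ 1 - cos (ω (x - a))` on the interval, hence
`c P_γ ≤ ∫ (1 - cos (ω (x - a))) dμ_γ = 1 - Re (φ_γ(ω) e^{-iaω}) → 0`.
The fidelity is a continuous function of `P_γ` equal to `1/2` at `0`.
-/

open MeasureTheory Filter Set
open scoped Topology Complex
open Real
open Complex (I)

lemma cos_pi_div_mul_le_cos_of_le_abs {d y D : ℝ} (hd : 0 ≤ d) (hdy : d ≤ |y|) (hyD : |y| ≤ D) :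
    cos (π / D * y) ≤ cos (π / D * d) := by
  have hD : 0 ≤ π / D := div_nonneg pi_pos.le (hd.trans (hdy.trans hyD))
  rw [← cos_abs (π / D * y), abs_mul, abs_of_nonneg hD]
  refine cos_le_cos_of_nonneg_of_le_pi (by positivity) ?_ (by gcongr)
  rw [div_mul_comm]
  exact mul_le_of_le_one_left pi_pos.le (div_le_one_of_le₀ hyD ((abs_nonneg y).trans hyD))

/-- Take `ω = π / D` with `D` bounding `|x - a|` on `K`: then `ω (x - a)` stays in `[-π, π]` and
away from `0`. -/
lemma IsCompact.exists_pos_le_one_sub_cos {K : Set ℝ} (hK : IsCompact K) {a : ℝ} (ha : a ∉ K) :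
    ∃ ω c : ℝ, 0 < c ∧ ∀ x ∈ K, c ≤ 1 - cos (ω * (x - a)) := by
  obtain ⟨d, hd, hball⟩ := Metric.mem_nhds_iff.1 (hK.isClosed.isOpen_compl.mem_nhds ha)
  obtain ⟨R, hR⟩ := hK.isBounded.subset_closedBall a
  set D := max R d
  have hdD : d ≤ D := le_max_right R d
  have hωd : 0 < π / D * d := by positivity
  refine ⟨π / D, 1 - cos (π / D * d), ?_, fun x hx => ?_⟩
  · have : π / D * d ≤ π := by
      rw [div_mul_comm]
      exact mul_le_of_le_one_left pi_pos.le (div_le_one_of_le₀ hdD (hd.le.trans hdD))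
    linarith [cos_lt_cos_of_nonneg_of_le_pi le_rfl this hωd, cos_zero]
  · have hdx : d ≤ |x - a| := by
      simpa [Real.dist_eq] using fun h => hball h hx
    have hxD : |x - a| ≤ D := by
      rw [← Real.dist_eq]
      exact (Metric.mem_closedBall.1 (hR hx)).trans (le_max_left R d)
    linarith [cos_pi_div_mul_le_cos_of_le_abs hd.le hdx hxD]

section CharFun

variable {μ : Measure ℝ}

lemma re_charFun_mul_exp_eq_integral_cos [IsFiniteMeasure μ] (t a : ℝ) :
    (charFun μ t * cexp (-(t * a * I))).re = ∫ x, cos (t * (x - a)) ∂μ := by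
  have hint : Integrable (fun x : ℝ => cexp (t * x * I)) μ :=
    (integrable_const (1 : ℝ)).mono (by fun_prop) (ae_of_all _ fun x => by
      rw [← Complex.ofReal_mul, Complex.norm_exp_ofReal_mul_I, norm_one])
  rw [charFun_apply_real, ← integral_mul_const, ← RCLike.re_to_complex,
    ← integral_re (hint.mul_const _)]
  congr with x
  rw [← Complex.exp_add, RCLike.re_to_complex, ← Complex.exp_ofReal_mul_I_re]
  push_cast
  ring_nf

lemma mul_measureReal_le_one_sub_re_charFun [IsProbabilityMeasure μ] {s : Set ℝ}
    (hs : MeasurableSet s) {t a c : ℝ} (hc : ∀ x ∈ s, c ≤ 1 - cos (t * (x - a))) :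
    c * μ.real s ≤ 1 - (charFun μ t * cexp (-(t * a * I))).re := by
  have hcos : Integrable (fun x => cos (t * (x - a))) μ :=
    (integrable_const (1 : ℝ)).mono (by fun_prop) (ae_of_all _ fun x => by
      simpa using abs_cos_le_one (t * (x - a)))
  have hint : Integrable (fun x => 1 - cos (t * (x - a))) μ := (integrable_const 1).sub hcos
  calc c * μ.real s ≤ ∫ x in s, 1 - cos (t * (x - a)) ∂μ :=
        setIntegral_ge_of_const_le_real hs (measure_ne_top μ s) hc hint.integrableOn
    _ ≤ ∫ x, 1 - cos (t * (x - a)) ∂μ :=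
        setIntegral_le_integral hint (ae_of_all _ fun x => sub_nonneg.2 (cos_le_one _))
    _ = 1 - (charFun μ t * cexp (-(t * a * I))).re := by
        rw [integral_sub (integrable_const 1) hcos, re_charFun_mul_exp_eq_integral_cos]
        simp

end CharFun

lemma tendsto_measureReal_zero_of_tendsto_charFun_dirac {ι : Type*} {l : Filter ι}
    {μ : ι → Measure ℝ} (hμ : ∀ᶠ i in l, IsProbabilityMeasure (μ i)) {a : ℝ}
    (h : ∀ t, Tendsto (fun i => charFun (μ i) t) l (𝓝 (charFun (Measure.dirac a) t)))
    {K : Set ℝ} (hK : IsCompact K) (haK : a ∉ K) {s : Set ℝ} (hs : MeasurableSet s)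
    (hsK : s ⊆ K) :
    Tendsto (fun i => (μ i).real s) l (𝓝 0) := by
  obtain ⟨t, c, hc, hcK⟩ := hK.exists_pos_le_one_sub_cos haK
  have hbound : Tendsto (fun i => (1 - (charFun (μ i) t * cexp (-(t * a * I))).re) / c) l
      (𝓝 0) := by
    have := (((Complex.continuous_re.tendsto _).comp
      ((h t).mul_const (cexp (-(t * a * I))))).const_sub 1).div_const c
    simpa [charFun_dirac, ← Complex.exp_add, mul_comm] using this
  refine squeeze_zero' (.of_forall fun i => measureReal_nonneg) ?_ hbound
  filter_upwards [hμ] with i hi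
  rw [le_div_iff₀' hc]
  exact mul_measureReal_le_one_sub_re_charFun hs fun x hx => hcK x (hsK hx)

/-- Characteristic function of the `α`-stable law with skewness `β`, location `a` and dispersion
`γ` (the parametrisation valid for `α ≠ 1`). -/
noncomputable def stableCharFun (α β a γ ω : ℝ) : ℂ :=
  cexp (I * a * ω - (γ : ℂ) * ((|ω| ^ α : ℝ) : ℂ) *
    (1 + I * (β : ℂ) * ((Real.sign ω : ℝ) : ℂ) * ((tan (α * π / 2) : ℝ) : ℂ)))

lemma tendsto_stableCharFun_zero (α β a ω : ℝ) :
    Tendsto (fun γ => stableCharFun α β a γ ω) (𝓝 0) (𝓝 (charFun (Measure.dirac a) ω)) := by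
  have hcont : Continuous fun γ => stableCharFun α β a γ ω := by unfold stableCharFun; fun_prop
  convert hcont.tendsto 0 using 2
  simp [stableCharFun, charFun_dirac]
  ring_nf

theorem forbidden_interval_alpha_stable_if_general
    (α β a : ℝ) (θ A : ℝ) (ha : a ∉ Icc (θ - A) (θ + A))
    (μ : ℝ → Measure ℝ) (hprob : ∀ γ, 0 < γ → IsProbabilityMeasure (μ γ))
    (hchar : ∀ γ, 0 < γ → ∀ ω : ℝ,
      ∫ x, Complex.exp (Complex.I * ω * x) ∂(μ γ)
        = Complex.exp (Complex.I * a * ω -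
            (γ : ℂ) * ((|ω| ^ α : ℝ) : ℂ) *
              (1 + Complex.I * (β : ℂ) * ((Real.sign ω : ℝ) : ℂ) *
                ((Real.tan (α * Real.pi / 2) : ℝ) : ℂ))))
    (qX qZ qXZ : ℝ) :
    Tendsto (fun γ => ((μ γ) (Ioo (θ - A) (θ + A))).toReal)
      (nhdsWithin 0 (Ioi 0)) (nhds 0) ∧
    Tendsto (fun γ =>
        1 / 2 + ((μ γ) (Ioo (θ - A) (θ + A))).toReal *
          (qX + qZ + qXZ * ((μ γ) (Ioo (θ - A) (θ + A))).toReal) / 2)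
      (nhdsWithin 0 (Ioi 0)) (nhds (1 / 2)) := by
  have hcharFun : ∀ ω, Tendsto (fun γ => charFun (μ γ) ω) (𝓝[>] 0)
      (𝓝 (charFun (Measure.dirac a) ω)) := by
    refine fun ω => ((tendsto_stableCharFun_zero α β a ω).mono_left nhdsWithin_le_nhds).congr' ?_
    filter_upwards [self_mem_nhdsWithin] with γ hγ
    rw [stableCharFun, ← hchar γ hγ ω, charFun_apply_real]
    congr with x
    ring_nf
  have hP : Tendsto (fun γ => ((μ γ) (Ioo (θ - A) (θ + A))).toReal) (𝓝[>] 0) (𝓝 0) :=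
    tendsto_measureReal_zero_of_tendsto_charFun_dirac (eventually_nhdsWithin_of_forall hprob)
      hcharFun isCompact_Icc ha measurableSet_Ioo Ioo_subset_Icc_self
  have hF : Continuous fun p : ℝ => 1 / 2 + p * (qX + qZ + qXZ * p) / 2 := by fun_prop
  exact ⟨hP, by simpa [Function.comp_def] using (hF.tendsto 0).comp hP⟩

/-- If-part of the infinite-variance (alpha-stable, `α ≠ 1`) forbidden-interval
theorem: if the location `a` lies outside the forbidden interval
`[θ − A, θ + A]`, then as the dispersion `γ → 0⁺` the detection parameter
`P_γ` tends to `0` and the teleportation fidelity tends to `1/2`. -/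
theorem forbidden_interval_alpha_stable_if
    (α β a : ℝ) (hα : α ∈ Ioc (0 : ℝ) 2) (hα1 : α ≠ 1)
    (hβ : β ∈ Icc (-1 : ℝ) 1)
    (θ A : ℝ) (hA : 0 < A) (hAθ : A < θ)
    (ha : a ∉ Icc (θ - A) (θ + A))
    (μ : ℝ → Measure ℝ) (hprob : ∀ γ, 0 < γ → IsProbabilityMeasure (μ γ))
    (hchar : ∀ γ, 0 < γ → ∀ ω : ℝ,
      ∫ x, Complex.exp (Complex.I * ω * x) ∂(μ γ)
        = Complex.exp (Complex.I * a * ω -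
            (γ : ℂ) * ((|ω| ^ α : ℝ) : ℂ) *
              (1 + Complex.I * (β : ℂ) * ((Real.sign ω : ℝ) : ℂ) *
                ((Real.tan (α * Real.pi / 2) : ℝ) : ℂ))))
    (qX qZ qXZ : ℝ) (hqX : 0 ≤ qX) (hqZ : 0 ≤ qZ) (hqXZ : 0 ≤ qXZ)
    (hsum : qX + qZ + qXZ = 1) :
    Tendsto (fun γ => ((μ γ) (Ioo (θ - A) (θ + A))).toReal)
      (nhdsWithin 0 (Ioi 0)) (nhds 0) ∧
    Tendsto (fun γ =>
        1 / 2 + ((μ γ) (Ioo (θ - A) (θ + A))).toReal *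
          (qX + qZ + qXZ * ((μ γ) (Ioo (θ - A) (θ + A))).toReal) / 2)
      (nhdsWithin 0 (Ioi 0)) (nhds (1 / 2)) :=
  forbidden_interval_alpha_stable_if_general α β a θ A ha μ hprob hchar qX qZ qXZ
end

section
/- Let α ∈ (0, 2] with α ≠ 1, β ∈ [−1, 1], a ∈ ℝ, and let θ, A be reals with 0 < A < θ and θ − A < a < θ + A. For each γ > 0 let μ_γ be a probability measure on ℝ whose characteristic function satisfies, for all ω ∈ ℝ, φ_{μ_γ}(ω) = exp( i·a·ω − γ·|ω|^α·(1 + i·β·sign(ω)·tan(απ/2)) ). Let qX, qZ, qXZ be nonnegative reals with qX + qZ + qXZ = 1, set P_γ = μ_γ((θ − A, θ + A)) and F_γ = 1/2 + P_γ·(qX + qZ + qXZ·P_γ)/2. Then P_γ → 1 and F_γ → 1 as γ → 0⁺. -/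
open MeasureTheory Filter Set

open Topology

/-! The characteristic functions `exp (i a ω - γ ψ(ω))` converge pointwise, as `γ → 0⁺`, to
`exp (i a ω)`, the characteristic function of `δ_a`. Lévy's truncation inequality
`μ {|x| > r} ≤ (r / 2) ‖∫_{-2/r}^{2/r} (1 - φ_μ)‖` and dominated convergence turn this into
vanishing tails `μ_γ {|x - a| > r}`, so every neighbourhood of `a`, in particular the forbidden
interval, receives mass tending to 1. The fidelity is continuous in `P_γ` and equals 1 at
`P = 1`. -/

section TailBounds

variable {ι : Type*} {l : Filter ι} [l.IsCountablyGenerated] {μ : ι → Measure ℝ}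

lemma tendsto_measureReal_abs_gt_of_tendsto_charFun_one
    (hμ : ∀ᶠ i in l, IsProbabilityMeasure (μ i))
    (h : ∀ t, Tendsto (fun i ↦ charFun (μ i) t) l (𝓝 1)) {r : ℝ} (hr : 0 < r) :
    Tendsto (fun i ↦ (μ i).real {x | r < |x|}) l (𝓝 0) := by
  have hint : Tendsto (fun i ↦ ∫ t in (-2 * r⁻¹)..(2 * r⁻¹), 1 - charFun (μ i) t) l
      (𝓝 (∫ _ in (-2 * r⁻¹)..(2 * r⁻¹), (0 : ℂ))) := by
    refine intervalIntegral.tendsto_integral_filter_of_dominated_convergence (fun _ ↦ 2) ?_ ?_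
      intervalIntegrable_const (ae_of_all _ fun t _ ↦ by simpa using (h t).const_sub 1)
    · filter_upwards [hμ] with i _
      exact (stronglyMeasurable_const.sub stronglyMeasurable_charFun).aestronglyMeasurable
    · filter_upwards [hμ] with i _
      exact ae_of_all _ fun t _ ↦ norm_one_sub_charFun_le_two
  have hbound : Tendsto (fun i ↦ 2⁻¹ * r * ‖∫ t in (-2 * r⁻¹)..(2 * r⁻¹), 1 - charFun (μ i) t‖)
      l (𝓝 0) := by
    simpa using (hint.norm.const_mul (2⁻¹ * r))
  refine tendsto_of_tendsto_of_tendsto_of_le_of_le' tendsto_const_nhds hbound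
    (Eventually.of_forall fun i ↦ measureReal_nonneg) ?_
  filter_upwards [hμ] with i _
  exact measureReal_abs_gt_le_integral_charFun hr

lemma tendsto_measureReal_abs_sub_gt_of_tendsto_charFun_dirac {a : ℝ}
    (hμ : ∀ᶠ i in l, IsProbabilityMeasure (μ i))
    (h : ∀ t, Tendsto (fun i ↦ charFun (μ i) t) l (𝓝 (charFun (Measure.dirac a) t)))
    {r : ℝ} (hr : 0 < r) :
    Tendsto (fun i ↦ (μ i).real {x | r < |x - a|}) l (𝓝 0) := by
  have hshift : ∀ t, Tendsto (fun i ↦ charFun ((μ i).map (· + -a)) t) l (𝓝 1) := by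
    intro t
    simp_rw [charFun_map_add_const]
    convert (h t).mul_const (Complex.exp (inner ℝ (-a) t * Complex.I)) using 2
    rw [charFun_dirac, ← Complex.exp_add]
    simp
  have hμ' : ∀ᶠ i in l, IsProbabilityMeasure ((μ i).map (· + -a)) := by
    filter_upwards [hμ] with i _
    exact Measure.isProbabilityMeasure_map (by fun_prop)
  convert tendsto_measureReal_abs_gt_of_tendsto_charFun_one hμ' hshift hr using 2 with i
  rw [map_measureReal_apply (by fun_prop) (measurableSet_lt measurable_const (by fun_prop))]
  rfl

lemma tendsto_measureReal_of_tendsto_charFun_dirac {a : ℝ} {s : Set ℝ}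
    (hs : s ∈ 𝓝 a) (hμ : ∀ᶠ i in l, IsProbabilityMeasure (μ i))
    (h : ∀ t, Tendsto (fun i ↦ charFun (μ i) t) l (𝓝 (charFun (Measure.dirac a) t))) :
    Tendsto (fun i ↦ (μ i).real s) l (𝓝 1) := by
  obtain ⟨r, hr, hrs⟩ := Metric.nhds_basis_closedBall.mem_iff.mp hs
  have htail := tendsto_measureReal_abs_sub_gt_of_tendsto_charFun_dirac hμ h hr
  have hcompl : (Metric.closedBall a r)ᶜ = {x | r < |x - a|} := by
    ext x
    simp [Real.dist_eq]
  refine tendsto_of_tendsto_of_tendsto_of_le_of_le' (by simpa using htail.const_sub 1)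
    tendsto_const_nhds ?_ ?_
  · filter_upwards [hμ] with i _
    rw [← hcompl, probReal_compl_eq_one_sub Metric.isClosed_closedBall.measurableSet,
      sub_sub_cancel]
    exact measureReal_mono hrs
  · filter_upwards [hμ] with i _
    exact measureReal_le_one

end TailBounds

lemma tendsto_charFun_dirac_nhdsGT_zero {μ : ℝ → Measure ℝ} {a : ℝ} {ψ : ℝ → ℂ}
    (hchar : ∀ γ, 0 < γ → ∀ t : ℝ,
      charFun (μ γ) t = Complex.exp (Complex.I * a * t - γ * ψ t)) (t : ℝ) :
    Tendsto (fun γ ↦ charFun (μ γ) t) (𝓝[>] 0) (𝓝 (charFun (Measure.dirac a) t)) := by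
  have hcont : Continuous fun γ : ℝ ↦ Complex.exp (Complex.I * a * t - γ * ψ t) := by fun_prop
  refine ((hcont.tendsto' 0 _ (by simp [charFun_dirac, mul_comm, mul_left_comm])).mono_left
    nhdsWithin_le_nhds).congr' ?_
  filter_upwards [self_mem_nhdsWithin] with γ hγ
  exact (hchar γ hγ t).symm

theorem forbidden_interval_alpha_stable_only_if_general
    (α β a : ℝ)
    (θ A : ℝ)
    (ha₁ : θ - A < a) (ha₂ : a < θ + A)
    (μ : ℝ → Measure ℝ) (hprob : ∀ γ, 0 < γ → IsProbabilityMeasure (μ γ))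
    (hchar : ∀ γ, 0 < γ → ∀ ω : ℝ,
      ∫ x, Complex.exp (Complex.I * ω * x) ∂(μ γ)
        = Complex.exp (Complex.I * a * ω -
            (γ : ℂ) * ((|ω| ^ α : ℝ) : ℂ) *
              (1 + Complex.I * (β : ℂ) * ((Real.sign ω : ℝ) : ℂ) *
                ((Real.tan (α * Real.pi / 2) : ℝ) : ℂ))))
    (qX qZ qXZ : ℝ)
    (hsum : qX + qZ + qXZ = 1) :
    Tendsto (fun γ => ((μ γ) (Ioo (θ - A) (θ + A))).toReal)
      (nhdsWithin 0 (Ioi 0)) (nhds 1) ∧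
    Tendsto (fun γ =>
        1 / 2 + ((μ γ) (Ioo (θ - A) (θ + A))).toReal *
          (qX + qZ + qXZ * ((μ γ) (Ioo (θ - A) (θ + A))).toReal) / 2)
      (nhdsWithin 0 (Ioi 0)) (nhds 1) := by
  have hcharFun : ∀ γ, 0 < γ → ∀ t : ℝ, charFun (μ γ) t = Complex.exp (Complex.I * a * t -
      γ * (((|t| ^ α : ℝ) : ℂ) * (1 + Complex.I * β * ((Real.sign t : ℝ) : ℂ) *
        ((Real.tan (α * Real.pi / 2) : ℝ) : ℂ)))) := by
    intro γ hγ t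
    simp_rw [charFun_apply_real, ← mul_assoc, ← hchar γ hγ t, mul_comm _ Complex.I,
      ← mul_assoc]
  have hP : Tendsto (fun γ ↦ (μ γ).real (Ioo (θ - A) (θ + A))) (𝓝[>] 0) (𝓝 1) :=
    tendsto_measureReal_of_tendsto_charFun_dirac (Ioo_mem_nhds ha₁ ha₂)
      (eventually_nhdsWithin_of_forall hprob) (tendsto_charFun_dirac_nhdsGT_zero hcharFun)
  refine ⟨hP, ?_⟩
  have hF := (hP.mul ((hP.const_mul qXZ).const_add (qX + qZ))).div_const 2 |>.const_add (1 / 2)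
  rwa [mul_one, hsum, one_mul, add_halves] at hF

/-- Only-if part of the infinite-variance (alpha-stable, `α ≠ 1`) forbidden-interval
theorem: if the location `a` lies inside the forbidden interval
`[θ − A, θ + A]`, then as the dispersion `γ → 0⁺` the detection parameter
`P_γ` tends to `1` and the teleportation fidelity tends to `1`. -/
theorem forbidden_interval_alpha_stable_only_if
    (α β a : ℝ) (hα : α ∈ Ioc (0 : ℝ) 2) (hα1 : α ≠ 1)
    (hβ : β ∈ Icc (-1 : ℝ) 1)
    (θ A : ℝ) (hA : 0 < A) (hAθ : A < θ)
    (ha₁ : θ - A < a) (ha₂ : a < θ + A)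
    (μ : ℝ → Measure ℝ) (hprob : ∀ γ, 0 < γ → IsProbabilityMeasure (μ γ))
    (hchar : ∀ γ, 0 < γ → ∀ ω : ℝ,
      ∫ x, Complex.exp (Complex.I * ω * x) ∂(μ γ)
        = Complex.exp (Complex.I * a * ω -
            (γ : ℂ) * ((|ω| ^ α : ℝ) : ℂ) *
              (1 + Complex.I * (β : ℂ) * ((Real.sign ω : ℝ) : ℂ) *
                ((Real.tan (α * Real.pi / 2) : ℝ) : ℂ))))
    (qX qZ qXZ : ℝ) (hqX : 0 ≤ qX) (hqZ : 0 ≤ qZ) (hqXZ : 0 ≤ qXZ)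
    (hsum : qX + qZ + qXZ = 1) :
    Tendsto (fun γ => ((μ γ) (Ioo (θ - A) (θ + A))).toReal)
      (nhdsWithin 0 (Ioi 0)) (nhds 1) ∧
    Tendsto (fun γ =>
        1 / 2 + ((μ γ) (Ioo (θ - A) (θ + A))).toReal *
          (qX + qZ + qXZ * ((μ γ) (Ioo (θ - A) (θ + A))).toReal) / 2)
      (nhdsWithin 0 (Ioi 0)) (nhds 1) :=
  forbidden_interval_alpha_stable_only_if_general α β a θ A ha₁ ha₂ μ hprob hchar qX qZ qXZ hsum
end

section
/- Let β ∈ [−1, 1], a ∈ ℝ, and let θ, A be reals with 0 < A < θ. For each γ > 0 let μ_γ be a probability measure on ℝ whose characteristic function satisfies, for all ω ∈ ℝ, φ_{μ_γ}(ω) = exp( i·a·ω − γ·|ω|·(1 − 2i·β·sign(ω)·ln|ω|/π) ) (with the convention that the factor is 1 at ω = 0), and set P_γ = μ_γ((θ − A, θ + A)). Then: (i) if a ∉ [θ − A, θ + A], P_γ → 0 as γ → 0⁺; and (ii) if θ − A < a < θ + A, P_γ → 1 as γ → 0⁺. -/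
/-!
As `γ → 0⁺` the characteristic functions `exp(iaω − γψ(ω))` converge pointwise to `exp(iaω)`,
that of the point mass at `a`. The truncation inequality
`μ{|x| > r} ≤ (r/2)‖∫_{-2/r}^{2/r} (1 − φ_μ)‖` together with dominated convergence turns this
into concentration: `μ_γ{|x − a| > r} → 0` for every `r > 0`. Hence `μ_γ` of the interval tends
to `1` when `a` is interior to it and to `0` when `a` lies outside its closure.
-/

open MeasureTheory Filter Set Complex
open scoped Topology

section CharFun

variable {ι : Type*} {l : Filter ι} {μ : ι → Measure ℝ}

lemma tendsto_measureReal_abs_gt_zero_of_tendsto_charFun [l.IsCountablyGenerated]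
    (hprob : ∀ᶠ i in l, IsProbabilityMeasure (μ i))
    (h : ∀ t, Tendsto (fun i ↦ charFun (μ i) t) l (𝓝 1)) {r : ℝ} (hr : 0 < r) :
    Tendsto (fun i ↦ (μ i).real {x | r < |x|}) l (𝓝 0) := by
  have hint : Tendsto (fun i ↦ ∫ t in (-2 * r⁻¹)..(2 * r⁻¹), 1 - charFun (μ i) t) l
      (𝓝 0) := by
    rw [← intervalIntegral.integral_zero]
    refine intervalIntegral.tendsto_integral_filter_of_dominated_convergence (fun _ ↦ 2)
      ?_ ?_ intervalIntegrable_const (ae_of_all _ fun t _ ↦ by simpa using (h t).const_sub 1)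
    · filter_upwards [hprob] with i hi
      exact (measurable_const.sub measurable_charFun).aestronglyMeasurable
    · filter_upwards [hprob] with i hi
      exact ae_of_all _ fun t _ ↦ norm_one_sub_charFun_le_two
  refine squeeze_zero' (.of_forall fun _ ↦ measureReal_nonneg) ?_
    (by simpa only [norm_zero, mul_zero] using hint.norm.const_mul (2⁻¹ * r))
  filter_upwards [hprob] with i hi
  exact measureReal_abs_gt_le_integral_charFun hr

lemma tendsto_measureReal_dist_gt_zero_of_tendsto_charFun_dirac [l.IsCountablyGenerated]
    (hprob : ∀ᶠ i in l, IsProbabilityMeasure (μ i)) {a : ℝ}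
    (h : ∀ t, Tendsto (fun i ↦ charFun (μ i) t) l (𝓝 (charFun (Measure.dirac a) t)))
    {r : ℝ} (hr : 0 < r) :
    Tendsto (fun i ↦ (μ i).real {x | r < dist x a}) l (𝓝 0) := by
  have hcentred : ∀ t, Tendsto (fun i ↦ charFun ((μ i).map (· + -a)) t) l (𝓝 1) := by
    intro t
    simp_rw [charFun_map_add_const]
    convert (h t).mul_const (cexp (inner ℝ (-a) t * I)) using 2
    rw [charFun_dirac, ← Complex.exp_add]
    simp
  have hprob' : ∀ᶠ i in l, IsProbabilityMeasure ((μ i).map (· + -a)) := by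
    filter_upwards [hprob] with i hi
    exact Measure.isProbabilityMeasure_map (by fun_prop)
  refine (tendsto_measureReal_abs_gt_zero_of_tendsto_charFun hprob' hcentred hr).congr fun i ↦ ?_
  rw [map_measureReal_apply (by fun_prop) (measurableSet_lt measurable_const (by fun_prop))]
  simp [Real.dist_eq, sub_eq_add_neg]

end CharFun

section Concentration

variable {ι X : Type*} {l : Filter ι} [PseudoMetricSpace X] [MeasurableSpace X]
  {μ : ι → Measure X} {a : X}

lemma tendsto_measureReal_zero_of_notMem_closure
    (hfin : ∀ᶠ i in l, IsFiniteMeasure (μ i))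
    (hconc : ∀ r > 0, Tendsto (fun i ↦ (μ i).real {x | r < dist x a}) l (𝓝 0))
    {s : Set X} (ha : a ∉ closure s) :
    Tendsto (fun i ↦ (μ i).real s) l (𝓝 0) := by
  obtain ⟨ε, hε, hfar⟩ : ∃ ε > 0, ∀ x ∈ s, ε ≤ dist a x := by
    simpa [Metric.mem_closure_iff] using ha
  refine squeeze_zero' (.of_forall fun _ ↦ measureReal_nonneg) ?_ (hconc (ε / 2) (by positivity))
  filter_upwards [hfin] with i hi
  refine measureReal_mono fun x hx ↦ ?_
  have := hfar x hx
  show ε / 2 < dist x a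
  rw [dist_comm]
  linarith

lemma tendsto_measureReal_one_of_mem_nhds
    (hprob : ∀ᶠ i in l, IsProbabilityMeasure (μ i))
    (hconc : ∀ r > 0, Tendsto (fun i ↦ (μ i).real {x | r < dist x a}) l (𝓝 0))
    {s : Set X} (hs : s ∈ 𝓝 a) (hmeas : MeasurableSet s) :
    Tendsto (fun i ↦ (μ i).real s) l (𝓝 1) := by
  have ha : a ∉ closure sᶜ := by
    rwa [closure_compl, notMem_compl_iff, mem_interior_iff_mem_nhds]
  have hcompl := tendsto_measureReal_zero_of_notMem_closure
    (hprob.mono fun _ _ ↦ inferInstance) hconc ha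
  have hlim : Tendsto (fun i ↦ 1 - (μ i).real sᶜ) l (𝓝 1) := by
    simpa using hcompl.const_sub 1
  refine hlim.congr' ?_
  filter_upwards [hprob] with i hi
  rw [probReal_compl_eq_one_sub hmeas, sub_sub_cancel]

end Concentration

lemma tendsto_charFun_dirac_of_charFun_eq_exp {μ : ℝ → Measure ℝ} {a : ℝ} (ψ : ℝ → ℂ)
    (hchar : ∀ γ > 0, ∀ t, charFun (μ γ) t = cexp (I * a * t - γ * ψ t)) (t : ℝ) :
    Tendsto (fun γ ↦ charFun (μ γ) t) (𝓝[>] 0) (𝓝 (charFun (Measure.dirac a) t)) := by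
  have hcont : Tendsto (fun γ : ℝ ↦ cexp (I * a * t - γ * ψ t)) (𝓝[>] 0)
      (𝓝 (cexp (I * a * t - (0 : ℝ) * ψ t))) :=
    ((by fun_prop : Continuous fun γ : ℝ ↦ cexp (I * a * t - γ * ψ t)).tendsto 0).mono_left
      nhdsWithin_le_nhds
  have hdirac : charFun (Measure.dirac a) t = cexp (I * a * t - (0 : ℝ) * ψ t) := by
    rw [charFun_dirac]
    congr 1
    simp only [RCLike.inner_apply, conj_trivial, ofReal_mul, ofReal_zero, zero_mul, sub_zero]
    ring
  rw [hdirac]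
  exact hcont.congr' (eventually_nhdsWithin_of_forall fun γ hγ ↦ (hchar γ hγ t).symm)

theorem forbidden_interval_alpha_stable_cauchy_case_general
    (β a : ℝ)
    (θ A : ℝ)
    (μ : ℝ → Measure ℝ) (hprob : ∀ γ, 0 < γ → IsProbabilityMeasure (μ γ))
    (hchar : ∀ γ, 0 < γ → ∀ ω : ℝ,
      ∫ x, Complex.exp (Complex.I * ω * x) ∂(μ γ)
        = Complex.exp (Complex.I * a * ω -
            (γ : ℂ) * ((|ω| : ℝ) : ℂ) *
              (1 - 2 * Complex.I * (β : ℂ) * ((Real.sign ω : ℝ) : ℂ) *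
                ((Real.log |ω| : ℝ) : ℂ) / ((Real.pi : ℝ) : ℂ)))) :
    (a ∉ Icc (θ - A) (θ + A) →
      Tendsto (fun γ => ((μ γ) (Ioo (θ - A) (θ + A))).toReal)
        (nhdsWithin 0 (Ioi 0)) (nhds 0)) ∧
    (θ - A < a → a < θ + A →
      Tendsto (fun γ => ((μ γ) (Ioo (θ - A) (θ + A))).toReal)
        (nhdsWithin 0 (Ioi 0)) (nhds 1)) := by
  have hprob' : ∀ᶠ γ in 𝓝[>] 0, IsProbabilityMeasure (μ γ) :=
    eventually_nhdsWithin_of_forall hprob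
  have hcharFun := tendsto_charFun_dirac_of_charFun_eq_exp (μ := μ)
    (fun ω ↦ ((|ω| : ℝ) : ℂ) * (1 - 2 * I * β * ((Real.sign ω : ℝ) : ℂ) *
      ((Real.log |ω| : ℝ) : ℂ) / ((Real.pi : ℝ) : ℂ)))
    fun γ hγ ω ↦ by
      rw [charFun_apply_real, ← mul_assoc, ← hchar γ hγ ω]
      congr with x
      congr 1
      ring
  have hconc : ∀ r > 0, Tendsto (fun γ ↦ (μ γ).real {x | r < dist x a}) (𝓝[>] 0) (𝓝 0) :=
    fun r hr ↦ tendsto_measureReal_dist_gt_zero_of_tendsto_charFun_dirac hprob' hcharFun hr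
  refine ⟨fun ha ↦ ?_, fun hlow hupp ↦ ?_⟩
  · refine tendsto_measureReal_zero_of_notMem_closure (hprob'.mono fun _ _ ↦ inferInstance)
      hconc fun hcl ↦ ha ?_
    exact closure_minimal Ioo_subset_Icc_self isClosed_Icc hcl
  · exact tendsto_measureReal_one_of_mem_nhds hprob' hconc (Ioo_mem_nhds hlow hupp)
      measurableSet_Ioo

/-- The `α = 1` (Cauchy-type) case of the infinite-variance forbidden-interval
theorem: for noise laws with characteristic function
`exp(iaω − γ|ω|(1 − 2iβ sign(ω) ln|ω|/π))` (interpreted as `1` at `ω = 0`;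
note `Real.log 0 = 0` makes the formula literally valid there), the detection
parameter `P_γ = μ_γ((θ−A, θ+A))` tends to `0` as `γ → 0⁺` when the location
`a` lies outside `[θ−A, θ+A]`, and tends to `1` when `θ−A < a < θ+A`. -/
theorem forbidden_interval_alpha_stable_cauchy_case
    (β a : ℝ) (hβ : β ∈ Icc (-1 : ℝ) 1)
    (θ A : ℝ) (hA : 0 < A) (hAθ : A < θ)
    (μ : ℝ → Measure ℝ) (hprob : ∀ γ, 0 < γ → IsProbabilityMeasure (μ γ))
    (hchar : ∀ γ, 0 < γ → ∀ ω : ℝ,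
      ∫ x, Complex.exp (Complex.I * ω * x) ∂(μ γ)
        = Complex.exp (Complex.I * a * ω -
            (γ : ℂ) * ((|ω| : ℝ) : ℂ) *
              (1 - 2 * Complex.I * (β : ℂ) * ((Real.sign ω : ℝ) : ℂ) *
                ((Real.log |ω| : ℝ) : ℂ) / ((Real.pi : ℝ) : ℂ)))) :
    (a ∉ Icc (θ - A) (θ + A) →
      Tendsto (fun γ => ((μ γ) (Ioo (θ - A) (θ + A))).toReal)
        (nhdsWithin 0 (Ioi 0)) (nhds 0)) ∧
    (θ - A < a → a < θ + A →
      Tendsto (fun γ => ((μ γ) (Ioo (θ - A) (θ + A))).toReal)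
        (nhdsWithin 0 (Ioi 0)) (nhds 1)) :=
  forbidden_interval_alpha_stable_cauchy_case_general β a θ A μ hprob hchar
end
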